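/- Let A ∈ ℂ^{n×n}, u, v ∈ ℂ^n, with minimal polynomial m of degree l, and suppose p_{uv}(λ) = m(λ)vᵀ(λI−A)⁻¹u has degree l−1 and no common roots with m. If there exists τ₀ > 0 such that for all τ with |τ| > τ₀ all roots of m − τp_{uv} are simple, then there are at most 2l−2 values of τ ∈ ℂ for which A + τuvᵀ has an eigenvalue of algebraic multiplicity at least two that is not an eigenvalue of A. -/

import Mathlib

/-!
Write `m` for the minimal polynomial. By the matrix determinant lemma,
`charpoly (A + τ u vᵀ) * m = charpoly A * (m - τ p)`, so off the spectrum of `A` the multiple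
eigenvalues of `A + τ u vᵀ` are the multiple roots of `m - τ p`. A multiple root `z` satisfies
`m z = τ p z` and `m' z = τ p' z`, hence it is a root of the Wronskian `m p' - m' p`, and
`τ = m z / p z` is determined by `z` (coprimality gives `p z ≠ 0`). The Wronskian has degree at
most `deg m + deg p - 1 = 2 l - 2`, and it is nonzero: otherwise the coprime `m` and `p` would
both be constant, and so would be `m - τ p`.
-/

open Matrix Polynomial

namespace Polynomial

theorem natDegree_wronskian_le {R : Type*} [CommRing R] (m p : R[X]) :
    (wronskian m p).natDegree ≤ m.natDegree + p.natDegree - 1 := by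
  by_cases hW : wronskian m p = 0
  · simp [hW]
  · have := natDegree_wronskian_lt_add hW
    omega

variable {K : Type*} [Field K] [CharZero K] {m p : K[X]}

theorem mem_roots_wronskian_of_two_le_rootMultiplicity (hmp : IsCoprime m p) {τ z : K}
    (hz : 2 ≤ rootMultiplicity z (m - C τ * p)) :
    z ∈ (wronskian m p).roots ∧ m.eval z / p.eval z = τ := by
  set q := m - C τ * p with hq_def
  have hq : q ≠ 0 := by rintro h; simp [h] at hz
  obtain ⟨hroot, hroot'⟩ := (one_lt_rootMultiplicity_iff_isRoot hq).mp hz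
  have hm : m.eval z = τ * p.eval z := by
    simp only [hq_def, IsRoot, eval_sub, eval_mul, eval_C] at hroot
    linear_combination hroot
  have hm' : (derivative m).eval z = τ * (derivative p).eval z := by
    simp only [hq_def, IsRoot, derivative_sub, derivative_C_mul, eval_sub, eval_mul,
      eval_C] at hroot'
    linear_combination hroot'
  have hp : p.eval z ≠ 0 := by
    intro h
    simpa [hm, h] using aeval_ne_zero_of_isCoprime hmp z
  have hW : wronskian m p ≠ 0 := by
    rw [Ne, hmp.wronskian_eq_zero_iff]
    rintro ⟨hdm, hdp⟩
    have hdq : derivative q = 0 := by simp [hq_def, hdm, hdp]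
    obtain ⟨c, hc⟩ := natDegree_eq_zero.mp (derivative_eq_zero.mp hdq)
    rw [← hc, IsRoot, eval_C] at hroot
    exact hq (by rw [← hc, hroot, C_0])
  refine ⟨?_, ?_⟩
  · rw [mem_roots hW, IsRoot, wronskian, eval_sub, eval_mul, eval_mul, hm, hm']
    ring
  · rw [hm, mul_div_cancel_right₀ τ hp]

theorem setOf_two_le_rootMultiplicity_subset [DecidableEq K] (hmp : IsCoprime m p) :
    {τ | ∃ z, 2 ≤ rootMultiplicity z (m - C τ * p)} ⊆
      ((wronskian m p).roots.toFinset.image fun z => m.eval z / p.eval z : Finset K) := by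
  rintro τ ⟨z, hz⟩
  obtain ⟨hW, hτ⟩ := mem_roots_wronskian_of_two_le_rootMultiplicity hmp hz
  exact Finset.mem_coe.mpr (Finset.mem_image.mpr ⟨z, Multiset.mem_toFinset.mpr hW, hτ⟩)

theorem finite_setOf_two_le_rootMultiplicity (hmp : IsCoprime m p) :
    {τ | ∃ z, 2 ≤ rootMultiplicity z (m - C τ * p)}.Finite := by
  classical
  exact (Finset.finite_toSet _).subset (setOf_two_le_rootMultiplicity_subset hmp)

theorem ncard_setOf_two_le_rootMultiplicity_le (hmp : IsCoprime m p) :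
    {τ | ∃ z, 2 ≤ rootMultiplicity z (m - C τ * p)}.ncard ≤
      m.natDegree + p.natDegree - 1 := by
  classical
  set W := wronskian m p
  calc _ ≤ (W.roots.toFinset.image fun z => m.eval z / p.eval z).card := by
        rw [← Set.ncard_coe_finset]
        exact Set.ncard_le_ncard (setOf_two_le_rootMultiplicity_subset hmp)
    _ ≤ W.roots.toFinset.card := Finset.card_image_le
    _ ≤ Multiset.card W.roots := Multiset.toFinset_card_le _
    _ ≤ W.natDegree := card_roots' W
    _ ≤ m.natDegree + p.natDegree - 1 := natDegree_wronskian_le m p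

end Polynomial

namespace Matrix

variable {ι K : Type*} [Fintype ι] [DecidableEq ι] [Field K]

theorem det_sub_smul_vecMulVec {B : Matrix ι ι K} (hB : IsUnit B.det) (τ : K) (u v : ι → K) :
    (B - τ • vecMulVec u v).det = B.det * (1 - τ * (v ⬝ᵥ B⁻¹ *ᵥ u)) := by
  have : B - τ • vecMulVec u v = B + replicateCol Unit (-τ • u) * replicateRow Unit v := by
    rw [← vecMulVec_eq Unit, neg_smul, ← smul_vecMulVec, neg_vecMulVec, ← sub_eq_add_neg]
  rw [this, det_add_replicateCol_mul_replicateRow hB, det_unique (1 + _ : Matrix Unit Unit K),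
    Matrix.mul_assoc, ← replicateCol_mulVec]
  simp [replicateRow_mul_replicateCol_apply, mulVec_neg, mulVec_smul, sub_eq_add_neg]

theorem eval_charpoly_add_smul_vecMulVec (A : Matrix ι ι K) (u v : ι → K) (τ : K) {z : K}
    (hz : z ∉ spectrum K A) :
    (A + τ • vecMulVec u v).charpoly.eval z =
      A.charpoly.eval z * (1 - τ * (v ⬝ᵥ (z • (1 : Matrix ι ι K) - A)⁻¹ *ᵥ u)) := by
  have hB : IsUnit (z • (1 : Matrix ι ι K) - A).det := by
    rw [← isUnit_iff_isUnit_det, ← Algebra.algebraMap_eq_smul_one]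
    exact spectrum.notMem_iff.mp hz
  rw [eval_charpoly, eval_charpoly, scalar_apply, ← smul_one_eq_diagonal, ← sub_sub,
    det_sub_smul_vecMulVec hB]

theorem charpoly_add_smul_vecMulVec_mul [Infinite K] (A : Matrix ι ι K) (u v : ι → K)
    {m p : K[X]}
    (hp : ∀ z ∉ spectrum K A, p.eval z = m.eval z * (v ⬝ᵥ (z • (1 : Matrix ι ι K) - A)⁻¹ *ᵥ u))
    (τ : K) :
    (A + τ • vecMulVec u v).charpoly * m = A.charpoly * (m - C τ * p) := by
  refine eq_of_infinite_eval_eq _ _ (A.finite_spectrum.infinite_compl.mono fun z hz => ?_)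
  simp only [Set.mem_ofPred_eq, eval_mul, eval_sub, eval_C,
    eval_charpoly_add_smul_vecMulVec A u v τ hz, hp z hz]
  ring

theorem rootMultiplicity_charpoly_add_smul_vecMulVec [Infinite K] (A : Matrix ι ι K)
    (u v : ι → K) {m p : K[X]}
    (hp : ∀ z ∉ spectrum K A, p.eval z = m.eval z * (v ⬝ᵥ (z • (1 : Matrix ι ι K) - A)⁻¹ *ᵥ u))
    (τ : K) {z : K} (hz : z ∉ spectrum K A) (hmz : ¬m.IsRoot z) :
    rootMultiplicity z (A + τ • vecMulVec u v).charpoly = rootMultiplicity z (m - C τ * p) := by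
  have key := charpoly_add_smul_vecMulVec_mul A u v hp τ
  have hm : m ≠ 0 := by rintro rfl; exact hmz (by simp)
  have hne : (A + τ • vecMulVec u v).charpoly * m ≠ 0 :=
    mul_ne_zero (charpoly_monic _).ne_zero hm
  have hchar : ¬A.charpoly.IsRoot z := mt mem_spectrum_iff_isRoot_charpoly.mpr hz
  have := congrArg (rootMultiplicity z) key
  rw [rootMultiplicity_mul hne, rootMultiplicity_mul (key ▸ hne),
    rootMultiplicity_eq_zero hmz, rootMultiplicity_eq_zero hchar] at this
  omega

end Matrix

theorem stmt_19_general (n : ℕ) (A : Matrix (Fin n) (Fin n) ℂ) (u v : Fin n → ℂ)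
    (p : Polynomial ℂ)
    (hp : ∀ z : ℂ, z ∉ spectrum ℂ A →
      p.eval z = (minpoly ℂ A).eval z *
        (v ⬝ᵥ ((z • (1 : Matrix (Fin n) (Fin n) ℂ) - A)⁻¹ *ᵥ u)))
    (hpdeg : p.natDegree = (minpoly ℂ A).natDegree - 1)
    (hcommon : ∀ z : ℂ, ¬(p.IsRoot z ∧ (minpoly ℂ A).IsRoot z)) :
    {τ : ℂ | ∃ z : ℂ, z ∉ spectrum ℂ A ∧
        2 ≤ Polynomial.rootMultiplicity z
          ((A + τ • Matrix.vecMulVec u v).charpoly)}.Finite ∧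
      {τ : ℂ | ∃ z : ℂ, z ∉ spectrum ℂ A ∧
          2 ≤ Polynomial.rootMultiplicity z
            ((A + τ • Matrix.vecMulVec u v).charpoly)}.ncard ≤
        2 * (minpoly ℂ A).natDegree - 2 := by
  have hcop : IsCoprime (minpoly ℂ A) p :=
    (isCoprime_iff_aeval_ne_zero_of_isAlgClosed ℂ ℂ _ _).mpr fun z => by
      simpa only [coe_aeval_eq_eval, IsRoot.def, or_comm] using not_and_or.mp (hcommon z)
  have hsub : {τ : ℂ | ∃ z : ℂ, z ∉ spectrum ℂ A ∧
      2 ≤ rootMultiplicity z ((A + τ • vecMulVec u v).charpoly)} ⊆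
        {τ | ∃ z, 2 ≤ rootMultiplicity z (minpoly ℂ A - C τ * p)} := by
    rintro τ ⟨z, hz, hmult⟩
    have hmz : ¬(minpoly ℂ A).IsRoot z := fun hroot =>
      hz (mem_spectrum_iff_isRoot_charpoly.mpr (hroot.dvd A.minpoly_dvd_charpoly))
    exact ⟨z, rootMultiplicity_charpoly_add_smul_vecMulVec A u v hp τ hz hmz ▸ hmult⟩
  refine ⟨(finite_setOf_two_le_rootMultiplicity hcop).subset hsub, ?_⟩
  calc _ ≤ _ := Set.ncard_le_ncard hsub (finite_setOf_two_le_rootMultiplicity hcop)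
    _ ≤ (minpoly ℂ A).natDegree + p.natDegree - 1 := ncard_setOf_two_le_rootMultiplicity_le hcop
    _ = 2 * (minpoly ℂ A).natDegree - 2 := by omega

/-- If p_{uv} has degree l-1 (l = deg of the minimal polynomial m of A), no common root
with m, and for all large |τ| all roots of m - τ p_{uv} are simple, then there are at
most 2l - 2 values of τ ∈ ℂ for which A + τ u vᵀ has an eigenvalue of algebraic
multiplicity at least two that is not an eigenvalue of A. -/
theorem stmt_19 (n : ℕ) (A : Matrix (Fin n) (Fin n) ℂ) (u v : Fin n → ℂ)
    (p : Polynomial ℂ)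
    (hp : ∀ z : ℂ, z ∉ spectrum ℂ A →
      p.eval z = (minpoly ℂ A).eval z *
        (v ⬝ᵥ ((z • (1 : Matrix (Fin n) (Fin n) ℂ) - A)⁻¹ *ᵥ u)))
    (hpdeg : p.natDegree = (minpoly ℂ A).natDegree - 1)
    (hcommon : ∀ z : ℂ, ¬(p.IsRoot z ∧ (minpoly ℂ A).IsRoot z))
    (hτ₀ : ∃ τ₀ > (0 : ℝ), ∀ τ : ℂ, τ₀ < ‖τ‖ →
      ((minpoly ℂ A - C τ * p).roots).Nodup) :
    {τ : ℂ | ∃ z : ℂ, z ∉ spectrum ℂ A ∧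
        2 ≤ Polynomial.rootMultiplicity z
          ((A + τ • Matrix.vecMulVec u v).charpoly)}.Finite ∧
      {τ : ℂ | ∃ z : ℂ, z ∉ spectrum ℂ A ∧
          2 ≤ Polynomial.rootMultiplicity z
            ((A + τ • Matrix.vecMulVec u v).charpoly)}.ncard ≤
        2 * (minpoly ℂ A).natDegree - 2 :=
  stmt_19_general n A u v p hp hpdeg hcommon
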